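/- Let b ∈ [-B, B] with B ≥ 0, let c̃ > 0 and α ∈ (0,1). Define Δ as the unique solution of Φ(Δ) − Φ(−2B/c̃ − Δ) = 1 − α, where Φ is the standard normal CDF. Then for every b ∈ [-B, B] and X ~ N(b, c̃²), P(X ∈ [−B − c̃Δ, B + c̃Δ]) ≥ 1 − α. -/

import Mathlib

/-!
Standardising, `X ∈ [-B - cΔ, B + cΔ]` means `(X - b) / c ∈ [-b/c - h, -b/c + h]` with
`h = B/c + Δ`. For a density that is even and decreasing in `|x|`, the mass of an interval of
fixed length only decreases as its centre moves away from `0`; the worst centre `|b/c| = B/c`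
gives exactly `Φ(Δ) - Φ(-2B/c - Δ) = 1 - α`. The defining equation forces `h ≥ 0`, since
otherwise its left-hand side is `≤ 0`.
-/

open ProbabilityTheory MeasureTheory Set

/-- Standard normal CDF. -/
noncomputable def stdNormalCDF (x : ℝ) : ℝ := (gaussianReal 0 1 (Set.Iic x)).toReal

theorem integral_centered_neg {f : ℝ → ℝ} (hf : ∀ x, f (-x) = f x) (t h : ℝ) :
    ∫ x in -t - h..-t + h, f x = ∫ x in t - h..t + h, f x := by
  calc ∫ x in -t - h..-t + h, f x = ∫ x in -t - h..-t + h, f (-x) := by simp only [hf]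
    _ = ∫ x in t - h..t + h, f x := by rw [intervalIntegral.integral_comp_neg]; ring_nf

theorem integral_centered_le_of_le {f : ℝ → ℝ} (hf : ∀ x y, |x| ≤ |y| → f y ≤ f x)
    (hfi : Integrable f) {h s t : ℝ} (hh : 0 ≤ h) (hs : 0 ≤ s) (hst : s ≤ t) :
    ∫ x in t - h..t + h, f x ≤ ∫ x in s - h..s + h, f x := by
  have hfi' : ∀ a b, IntervalIntegrable f volume a b := fun a b => hfi.intervalIntegrable
  have shift : ∫ x in s - h..t - h, f (x + 2 * h) = ∫ x in s + h..t + h, f x := by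
    rw [intervalIntegral.integral_comp_add_right]
    ring_nf
  have gain : ∫ x in s - h..t - h, f (x + 2 * h) ≤ ∫ x in s - h..t - h, f x :=
    intervalIntegral.integral_mono_on (by linarith)
      ((hfi.comp_add_right _).intervalIntegrable) (hfi' _ _) fun x hx =>
        hf _ _ (abs_le_abs (by linarith [hx.1]) (by linarith [hx.1]))
  have := intervalIntegral.integral_interval_sub_interval_comm (hfi' (s - h) (s + h))
    (hfi' (t - h) (t + h)) (hfi' (s - h) (t - h))
  linarith

theorem integral_centered_le_of_abs_le {f : ℝ → ℝ} (hf : ∀ x y, |x| ≤ |y| → f y ≤ f x)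
    (hfi : Integrable f) {h s t : ℝ} (hh : 0 ≤ h) (hst : |s| ≤ |t|) :
    ∫ x in t - h..t + h, f x ≤ ∫ x in s - h..s + h, f x := by
  have heven : ∀ x, f (-x) = f x := fun x =>
    le_antisymm (hf _ _ (abs_neg x).ge) (hf _ _ (abs_neg x).le)
  have habs : ∀ r, ∫ x in |r| - h..|r| + h, f x = ∫ x in r - h..r + h, f x := fun r => by
    rcases abs_choice r with hr | hr <;> rw [hr]
    exact integral_centered_neg heven r h
  rw [← habs s, ← habs t]
  exact integral_centered_le_of_le hf hfi hh (abs_nonneg s) hst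

theorem gaussianPDFReal_le_of_abs_sub_le {μ : ℝ} {v : NNReal} {x y : ℝ} (h : |x - μ| ≤ |y - μ|) :
    gaussianPDFReal μ v y ≤ gaussianPDFReal μ v x := by
  simp only [gaussianPDFReal]
  gcongr _ * Real.exp ?_
  exact div_le_div_of_nonneg_right (neg_le_neg (sq_le_sq.mpr h)) (by positivity)

theorem toReal_gaussianReal_eq_integral (μ : ℝ) {v : NNReal} (hv : v ≠ 0) (s : Set ℝ) :
    (gaussianReal μ v s).toReal = ∫ x in s, gaussianPDFReal μ v x := by
  rw [gaussianReal_apply_eq_integral μ hv,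
    ENNReal.toReal_ofReal (integral_nonneg fun x => gaussianPDFReal_nonneg μ v x)]

theorem stdNormalCDF_sub_eq_integral (x y : ℝ) :
    stdNormalCDF y - stdNormalCDF x = ∫ t in x..y, gaussianPDFReal 0 1 t := by
  simp only [stdNormalCDF, toReal_gaussianReal_eq_integral 0 one_ne_zero]
  exact intervalIntegral.integral_Iic_sub_Iic (integrable_gaussianPDFReal 0 1).integrableOn
    (integrable_gaussianPDFReal 0 1).integrableOn

theorem stdNormalCDF_mono : Monotone stdNormalCDF := fun _ _ h =>
  ENNReal.toReal_mono (measure_ne_top _ _) (measure_mono (Iic_subset_Iic.mpr h))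

theorem gaussianReal_eq_map_affine (b c : ℝ) :
    gaussianReal b (c ^ 2).toNNReal = (gaussianReal 0 1).map (fun x => c * x + b) := by
  have hmap : (gaussianReal 0 1).map (fun x => c * x + b)
      = ((gaussianReal 0 1).map (c * ·)).map (· + b) := by
    rw [Measure.map_map (by fun_prop) (by fun_prop)]
    rfl
  rw [hmap, gaussianReal_map_const_mul, gaussianReal_map_add_const]
  congr 1
  · ring
  · ext; simp [sq_nonneg]

theorem preimage_affine_Icc {K : Type*} [Field K] [LinearOrder K] [IsStrictOrderedRing K]
    {b c : K} (hc : 0 < c) (l u : K) :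
    (fun x => c * x + b) ⁻¹' Icc l u = Icc ((l - b) / c) ((u - b) / c) := by
  ext x
  simp only [mem_preimage, mem_Icc, le_div_iff₀ hc, div_le_iff₀ hc]
  constructor <;> rintro ⟨h₁, h₂⟩ <;> constructor <;> linarith

theorem toReal_gaussianReal_Icc {b c l u : ℝ} (hc : 0 < c) (hlu : l ≤ u) :
    (gaussianReal b (c ^ 2).toNNReal (Icc l u)).toReal
      = stdNormalCDF ((u - b) / c) - stdNormalCDF ((l - b) / c) := by
  rw [gaussianReal_eq_map_affine, Measure.map_apply (by fun_prop) measurableSet_Icc,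
    preimage_affine_Icc hc, toReal_gaussianReal_eq_integral 0 one_ne_zero,
    stdNormalCDF_sub_eq_integral, integral_Icc_eq_integral_Ioc,
    intervalIntegral.integral_of_le]
  gcongr

theorem statement0_general (B c α Δ : ℝ) (hc : 0 < c) (hα : α ∈ Set.Ioo (0:ℝ) 1)
    (hΔ : stdNormalCDF Δ - stdNormalCDF (-2 * B / c - Δ) = 1 - α) :
    ∀ b ∈ Set.Icc (-B) B,
      1 - α ≤ (gaussianReal b (Real.toNNReal (c ^ 2))
        (Set.Icc (-B - c * Δ) (B + c * Δ))).toReal := by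
  intro b hb
  obtain ⟨h, rfl⟩ : ∃ h, Δ = h - B / c := ⟨B / c + Δ, by ring⟩
  have hh : 0 ≤ h := by
    by_contra! hneg
    have : h - B / c ≤ -2 * B / c - (h - B / c) := by
      rw [mul_div_assoc]
      linarith
    linarith [stdNormalCDF_mono this, hα.2]
  have hcenter : |-b / c| ≤ |-B / c| := by
    rw [abs_div, abs_div, abs_neg, abs_neg]
    exact div_le_div_of_nonneg_right ((abs_le.mpr hb).trans (le_abs_self B)) (abs_nonneg c)
  calc 1 - α = ∫ x in -B / c - h..-B / c + h, gaussianPDFReal 0 1 x := by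
        rw [← hΔ, stdNormalCDF_sub_eq_integral]
        congr 1 <;> ring
    _ ≤ ∫ x in -b / c - h..-b / c + h, gaussianPDFReal 0 1 x :=
        integral_centered_le_of_abs_le (fun x y hxy => gaussianPDFReal_le_of_abs_sub_le
          (by simpa using hxy)) (integrable_gaussianPDFReal 0 1) hh hcenter
    _ = _ := by
        have hlu : -B - c * (h - B / c) ≤ B + c * (h - B / c) := by
          rw [mul_sub, mul_div_cancel₀ B hc.ne']
          linarith [mul_nonneg hc.le hh]
        rw [toReal_gaussianReal_Icc hc hlu, stdNormalCDF_sub_eq_integral]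
        congr 1 <;> field_simp <;> ring

theorem statement0 (B c α Δ : ℝ) (hB : 0 ≤ B) (hc : 0 < c) (hα : α ∈ Set.Ioo (0:ℝ) 1)
    (hΔ : stdNormalCDF Δ - stdNormalCDF (-2 * B / c - Δ) = 1 - α) :
    ∀ b ∈ Set.Icc (-B) B,
      1 - α ≤ (gaussianReal b (Real.toNNReal (c ^ 2))
        (Set.Icc (-B - c * Δ) (B + c * Δ))).toReal :=
  statement0_general B c α Δ hc hα hΔ
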